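/- arXiv:2207.13453 — 2 statements merged into one kernel-verified Lean document; each statement's English description precedes it below -/
import Mathlib

section
/- Let H be the one-step importance-sampling operator HQ(s,a) = Q(s,a) + E_η[λ·(r + γ·E_π Q(s',·) − Q(s,a))] on a finite MDP, with fixed point Q^π. Then for any Q, HQ(s,a) − Q^π(s,a) = E_η[γ·(E_π[(Q − Q^π)(s',·)] − λ·(Q − Q^π)(s',a'))], i.e., the deviation of HQ from the fixed point is the expected discounted difference between the on-policy average deviation and the λ-weighted deviation at the sampled next state-action pair. -/
open Finset

/-- Difference lemma: the deviation of the one-step importance-sampling operator `H`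
from its fixed point `Qπ` equals the expected discounted difference between the
on-policy average deviation and the `λ`-weighted deviation at the sampled next
state-action pair. -/
theorem importance_sampling_difference_lemma
    {S A : Type*} [Fintype S] [Fintype A] [Nonempty S] [Nonempty A]
    (γ : ℝ) (hγ0 : 0 ≤ γ) (hγ1 : γ < 1)
    (r : S → A → ℝ) (P : S → A → S → ℝ)
    (hP0 : ∀ s a s', 0 ≤ P s a s') (hP1 : ∀ s a, ∑ s', P s a s' = 1)
    (pi eta : S → A → ℝ)
    (hpi0 : ∀ s a, 0 ≤ pi s a) (hpi1 : ∀ s, ∑ a, pi s a = 1)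
    (heta0 : ∀ s a, 0 ≤ eta s a) (heta1 : ∀ s, ∑ a, eta s a = 1)
    (lam : A → ℝ) (hlam : ∀ a, lam a ∈ Set.Icc (0 : ℝ) 1)
    (H : (S × A → ℝ) → (S × A → ℝ))
    (hH : ∀ Q s a, H Q (s, a) =
      ∑ s', P s a s' * ∑ a', eta s' a' *
        (r s a + γ * ((∑ b, pi s' b * Q (s', b)) - lam a' * Q (s', a'))))
    (Qpi : S × A → ℝ) (hfix : H Qpi = Qpi) :
    ∀ (Q : S × A → ℝ) (s : S) (a : A),
      H Q (s, a) - Qpi (s, a) =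
        ∑ s', P s a s' * ∑ a', eta s' a' *
          (γ * ((∑ b, pi s' b * (Q (s', b) - Qpi (s', b)))
            - lam a' * (Q (s', a') - Qpi (s', a')))) := by
  intro Q s a
  conv_lhs => rw [← hfix, hH, hH]
  rw [← Finset.sum_sub_distrib]
  refine Finset.sum_congr rfl fun s' _ => ?_
  rw [← mul_sub, ← Finset.sum_sub_distrib]
  congr 1
  refine Finset.sum_congr rfl fun a' _ => ?_
  rw [← mul_sub]
  congr 1
  simp only [mul_sub, Finset.sum_sub_distrib]
  ring
end

section
/- Let (Δ_t) be a sequence of nonnegative reals satisfying Δ_{t+1} ≤ (1 − η_t)Δ_t + η_t(κΔ_t + c_t), where η_t ∈ [0,1], Σ_t η_t = ∞, κ ∈ [0,1), and c_t → 0. Then Δ_t → 0. -/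
open Filter

theorem error_sequence_tendsto_zero
    (Δ η c : ℕ → ℝ) (κ : ℝ)
    (hΔ : ∀ t, 0 ≤ Δ t)
    (hη : ∀ t, η t ∈ Set.Icc (0 : ℝ) 1)
    (hηsum : Filter.Tendsto (fun n => ∑ t ∈ Finset.range n, η t) Filter.atTop Filter.atTop)
    (hκ0 : 0 ≤ κ) (hκ1 : κ < 1)
    (hc : Filter.Tendsto c Filter.atTop (nhds 0))
    (hrec : ∀ t, Δ (t + 1) ≤ (1 - η t) * Δ t + η t * (κ * Δ t + c t)) :
    Filter.Tendsto Δ Filter.atTop (nhds 0) := by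
  rw [Metric.tendsto_atTop]
  intro ε hε
  have hκ' : 0 < 1 - κ := by linarith
  have hδ : 0 < (1 - κ) * (ε / 2) := by positivity
  obtain ⟨T, hT⟩ := (Metric.tendsto_atTop.mp hc) _ hδ
  set a : ℕ → ℝ := fun t => max (Δ t - ε / 2) 0 with ha
  have ha0 : ∀ t, 0 ≤ a t := fun t => le_max_right _ _
  have hstep : ∀ t, T ≤ t → a (t + 1) ≤ (1 - η t * (1 - κ)) * a t := by
    intro t ht
    obtain ⟨hη0, hη1⟩ := hη t
    have hβ0 : 0 ≤ 1 - η t * (1 - κ) := by nlinarith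
    have hct : c t < (1 - κ) * (ε / 2) := by
      have := hT t ht
      rw [Real.dist_eq, sub_zero] at this
      exact (abs_lt.mp this).2
    have hηc : η t * c t ≤ η t * ((1 - κ) * (ε / 2)) :=
      mul_le_mul_of_nonneg_left hct.le hη0
    have h1 : Δ (t + 1) - ε / 2 ≤ (1 - η t * (1 - κ)) * (Δ t - ε / 2) := by
      have := hrec t
      nlinarith
    have h2 : Δ t - ε / 2 ≤ a t := le_max_left _ _
    apply max_le
    · calc Δ (t + 1) - ε / 2 ≤ (1 - η t * (1 - κ)) * (Δ t - ε / 2) := h1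
        _ ≤ (1 - η t * (1 - κ)) * a t := mul_le_mul_of_nonneg_left h2 hβ0
    · exact mul_nonneg hβ0 (ha0 t)
  have hind : ∀ n, a (T + n) ≤
      a T * Real.exp (-((1 - κ) * ∑ i ∈ Finset.range n, η (T + i))) := by
    intro n
    induction n with
    | zero => simp
    | succ n ih =>
      have hstep' := hstep (T + n) (Nat.le_add_right _ _)
      have hb : 1 - η (T + n) * (1 - κ) ≤ Real.exp (-((1 - κ) * η (T + n))) := by
        nlinarith [Real.add_one_le_exp (-((1 - κ) * η (T + n)))]
      calc a (T + (n + 1)) ≤ (1 - η (T + n) * (1 - κ)) * a (T + n) := hstep'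
        _ ≤ Real.exp (-((1 - κ) * η (T + n))) *
            (a T * Real.exp (-((1 - κ) * ∑ i ∈ Finset.range n, η (T + i)))) :=
          mul_le_mul hb ih (ha0 _) (Real.exp_nonneg _)
        _ = a T * Real.exp (-((1 - κ) * ∑ i ∈ Finset.range (n + 1), η (T + i))) := by
          rw [Finset.sum_range_succ, mul_add, neg_add, Real.exp_add]; ring
  have hsumT : Tendsto (fun n => ∑ i ∈ Finset.range n, η (T + i)) atTop atTop := by
    have h1 : Tendsto (fun n : ℕ => T + n) atTop atTop :=
      tendsto_atTop_mono (fun n => Nat.le_add_left n T) tendsto_id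
    have h2 : Tendsto (fun n => ∑ t ∈ Finset.range (T + n), η t) atTop atTop :=
      hηsum.comp h1
    have h3 : Tendsto (fun n =>
        (∑ t ∈ Finset.range (T + n), η t) - ∑ t ∈ Finset.range T, η t) atTop atTop :=
      tendsto_atTop_add_const_right _ _ h2
    refine h3.congr fun n => ?_
    rw [Finset.sum_range_add]
    ring
  have hexp : Tendsto (fun n =>
      a T * Real.exp (-((1 - κ) * ∑ i ∈ Finset.range n, η (T + i)))) atTop (nhds 0) := by
    have h1 : Tendsto (fun n => (1 - κ) * ∑ i ∈ Finset.range n, η (T + i)) atTop atTop :=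
      Tendsto.const_mul_atTop hκ' hsumT
    have h2 : Tendsto (fun n => -((1 - κ) * ∑ i ∈ Finset.range n, η (T + i))) atTop atBot :=
      tendsto_neg_atBot_iff.mpr h1
    have h3 := Real.tendsto_exp_atBot.comp h2
    have := h3.const_mul (a T)
    simpa using this
  have haT : Tendsto (fun n => a (T + n)) atTop (nhds 0) :=
    squeeze_zero (fun n => ha0 _) hind hexp
  obtain ⟨N, hN⟩ := (Metric.tendsto_atTop.mp haT) (ε / 2) (by positivity)
  refine ⟨T + N, fun m hm => ?_⟩
  have hmN : N ≤ m - T := by omega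
  have := hN (m - T) hmN
  rw [Real.dist_eq, sub_zero] at this ⊢
  have heq : T + (m - T) = m := by omega
  rw [heq] at this
  have ham : a m < ε / 2 := lt_of_abs_lt this
  have : Δ m - ε / 2 ≤ a m := le_max_left _ _
  rw [abs_of_nonneg (hΔ m)]
  linarith
end
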